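/- arXiv:2605.05022 — 7 statements merged into one kernel-verified Lean document; each statement's English description precedes it below -/
import Mathlib

section
/- If g is a solution of equation (1.4) on an open interval I ⊆ (0, ∞), r₀ ∈ I, g(r₀) > 0 and g'(r₀) = 0, then g''(r₀) < 0; in particular r₀ is a strict local maximum of g. Consequently, if g > 0 on I then g has at most one critical point in I. -/
open Set Filter

/-- Equation (1.4): `g'' = (1 + g'²)·[((r/2) f'(r²+g²) − (n−1)/r) g' − (1/2) f'(r²+g²) g]`,
for a twice differentiable function `g` on the set `I`. -/
def SolvesEq14 (n : ℕ) (f : ℝ → ℝ) (g : ℝ → ℝ) (I : Set ℝ) : Prop :=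
  ∀ r ∈ I,
    HasDerivAt g (deriv g r) r ∧
    HasDerivAt (deriv g)
      ((1 + deriv g r ^ 2) *
        ((r / 2 * deriv f (r ^ 2 + g r ^ 2) - ((n : ℝ) - 1) / r) * deriv g r
          - deriv f (r ^ 2 + g r ^ 2) / 2 * g r)) r

/-- If `h r₀ = 0` and `h` has negative derivative at `r₀`, then `h > 0` just left of `r₀`
and `h < 0` just right of `r₀`. -/
lemma sign_near {h : ℝ → ℝ} {r₀ c : ℝ} (hd : HasDerivAt h c r₀) (hc : c < 0)
    (h0 : h r₀ = 0) :
    ∃ δ > 0, ∀ r, |r - r₀| < δ → (r < r₀ → 0 < h r) ∧ (r₀ < r → h r < 0) := by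
  have ht := hasDerivAt_iff_tendsto_slope.mp hd
  have hev : ∀ᶠ r in nhdsWithin r₀ {r₀}ᶜ, slope h r₀ r < 0 :=
    ht.eventually_lt_const hc
  rw [eventually_nhdsWithin_iff, Metric.eventually_nhds_iff] at hev
  obtain ⟨δ, hδ, hδ'⟩ := hev
  refine ⟨δ, hδ, fun r hr => ?_⟩
  constructor
  · intro hrlt
    have hne : r ∈ ({r₀}ᶜ : Set ℝ) := by simp [ne_of_lt hrlt]
    have hs := hδ' (by simpa [Real.dist_eq] using hr) hne
    rw [slope_def_field, h0, sub_zero] at hs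
    rcases div_neg_iff.mp hs with ⟨h1, h2⟩ | ⟨h1, h2⟩
    · exact h1
    · linarith
  · intro hrgt
    have hne : r ∈ ({r₀}ᶜ : Set ℝ) := by simp [(ne_of_gt hrgt)]
    have hs := hδ' (by simpa [Real.dist_eq] using hr) hne
    rw [slope_def_field, h0, sub_zero] at hs
    rcases div_neg_iff.mp hs with ⟨h1, h2⟩ | ⟨h1, h2⟩
    · linarith
    · exact h1

/-- At a critical point with positive value, the second derivative of a solution of (1.4)
is negative. -/
lemma second_deriv_neg (n : ℕ) (m : ℝ) (hm : 0 < m) (f : ℝ → ℝ)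
    (hlow : ∀ s : ℝ, m ≤ deriv f s)
    {a b : ℝ} (g : ℝ → ℝ) (hg : SolvesEq14 n f g (Set.Ioo a b))
    {r₀ : ℝ} (hr₀ : r₀ ∈ Set.Ioo a b) (hpos : 0 < g r₀) (hd : deriv g r₀ = 0) :
    HasDerivAt (deriv g) (deriv (deriv g) r₀) r₀ ∧ deriv (deriv g) r₀ < 0 := by
  have h2 := (hg r₀ hr₀).2
  set c := (1 + deriv g r₀ ^ 2) *
      ((r₀ / 2 * deriv f (r₀ ^ 2 + g r₀ ^ 2) - ((n : ℝ) - 1) / r₀) * deriv g r₀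
        - deriv f (r₀ ^ 2 + g r₀ ^ 2) / 2 * g r₀) with hcdef
  have hcval : c = -(deriv f (r₀ ^ 2 + g r₀ ^ 2) / 2 * g r₀) := by
    rw [hcdef, hd]; ring
  have hcneg : c < 0 := by
    rw [hcval]
    have := hlow (r₀ ^ 2 + g r₀ ^ 2)
    nlinarith
  have heq : deriv (deriv g) r₀ = c := h2.deriv
  exact ⟨heq ▸ h2, heq ▸ hcneg⟩

/-- At a critical point with positive value, a solution of (1.4) has `g'' < 0`; hence the
critical point is a strict local maximum, and a positive solution has at most one
critical point. -/
theorem critical_points_of_eq14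
    (n : ℕ) (hn : 2 ≤ n) (m M : ℝ) (hm : 0 < m) (hmM : m ≤ M)
    (f : ℝ → ℝ) (hf : ContDiff ℝ 2 f)
    (hconv : ∀ s : ℝ, 0 ≤ deriv (deriv f) s)
    (hlow : ∀ s : ℝ, m ≤ deriv f s) (hup : ∀ s : ℝ, deriv f s ≤ M)
    (a b : ℝ) (hI : Set.Ioo a b ⊆ Set.Ioi (0 : ℝ))
    (g : ℝ → ℝ) (hg : SolvesEq14 n f g (Set.Ioo a b)) :
    (∀ r₀ ∈ Set.Ioo a b, 0 < g r₀ → deriv g r₀ = 0 →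
      deriv (deriv g) r₀ < 0 ∧
      ∃ ε > 0, ∀ r ∈ Set.Ioo a b, |r - r₀| < ε → r ≠ r₀ → g r < g r₀) ∧
    ((∀ r ∈ Set.Ioo a b, 0 < g r) →
      ∀ r₁ ∈ Set.Ioo a b, ∀ r₂ ∈ Set.Ioo a b,
        deriv g r₁ = 0 → deriv g r₂ = 0 → r₁ = r₂) := by
  -- continuity of g and deriv g on Ioo a b
  have hgcont : ContinuousOn g (Set.Ioo a b) := fun x hx =>
    ((hg x hx).1.differentiableAt.continuousAt).continuousWithinAt
  have hg'cont : ContinuousOn (deriv g) (Set.Ioo a b) := fun x hx =>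
    ((hg x hx).2.differentiableAt.continuousAt).continuousWithinAt
  -- strict local max part
  have main : ∀ r₀ ∈ Set.Ioo a b, 0 < g r₀ → deriv g r₀ = 0 →
      deriv (deriv g) r₀ < 0 ∧
      ∃ ε > 0, ∀ r ∈ Set.Ioo a b, |r - r₀| < ε → r ≠ r₀ → g r < g r₀ := by
    intro r₀ hr₀ hpos hd
    obtain ⟨h2, hneg⟩ := second_deriv_neg n m hm f hlow g hg hr₀ hpos hd
    refine ⟨hneg, ?_⟩
    obtain ⟨δ, hδpos, hδ⟩ := sign_near h2 hneg hd
    refine ⟨δ, hδpos, fun r hr hrδ hrne => ?_⟩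
    rcases lt_or_gt_of_ne hrne with hlt | hgt
    · -- r < r₀ : MVT on [r, r₀]
      have hsub : Set.Icc r r₀ ⊆ Set.Ioo a b := by
        intro x hx; exact ⟨lt_of_lt_of_le hr.1 hx.1, lt_of_le_of_lt hx.2 hr₀.2⟩
      obtain ⟨cc, hcc, hccval⟩ := exists_hasDerivAt_eq_slope g (deriv g) hlt
        (hgcont.mono hsub) (fun x hx => (hg x (hsub (Set.Ioo_subset_Icc_self hx))).1)
      have hccpos : 0 < deriv g cc := by
        have : |cc - r₀| < δ := by
          rw [abs_sub_lt_iff]; constructor <;>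
            [linarith [hcc.2]; linarith [hcc.1, (abs_sub_lt_iff.mp hrδ).2]]
        exact (hδ cc this).1 hcc.2
      rw [hccval] at hccpos
      have : 0 < r₀ - r := by linarith
      nlinarith [mul_pos hccpos this, div_mul_cancel₀ (g r₀ - g r) (ne_of_gt this)]
    · -- r₀ < r : MVT on [r₀, r]
      have hsub : Set.Icc r₀ r ⊆ Set.Ioo a b := by
        intro x hx; exact ⟨lt_of_lt_of_le hr₀.1 hx.1, lt_of_le_of_lt hx.2 hr.2⟩
      obtain ⟨cc, hcc, hccval⟩ := exists_hasDerivAt_eq_slope g (deriv g) hgt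
        (hgcont.mono hsub) (fun x hx => (hg x (hsub (Set.Ioo_subset_Icc_self hx))).1)
      have hccneg : deriv g cc < 0 := by
        have : |cc - r₀| < δ := by
          rw [abs_sub_lt_iff]; constructor <;>
            [linarith [hcc.2, (abs_sub_lt_iff.mp hrδ).1]; linarith [hcc.1]]
        exact (hδ cc this).2 hcc.1
      rw [hccval] at hccneg
      have : 0 < r - r₀ := by linarith
      nlinarith [div_mul_cancel₀ (g r - g r₀) (ne_of_gt this)]
  refine ⟨main, ?_⟩
  -- uniqueness of critical points
  intro hgpos
  -- key claim: no two distinct critical points with r₁ < r₂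
  have key : ∀ r₁ ∈ Set.Ioo a b, ∀ r₂ ∈ Set.Ioo a b, r₁ < r₂ →
      deriv g r₁ = 0 → deriv g r₂ = 0 → False := by
    intro r₁ hr₁ r₂ hr₂ hlt hd₁ hd₂
    obtain ⟨h21, hneg1⟩ := second_deriv_neg n m hm f hlow g hg hr₁ (hgpos r₁ hr₁) hd₁
    obtain ⟨h22, hneg2⟩ := second_deriv_neg n m hm f hlow g hg hr₂ (hgpos r₂ hr₂) hd₂
    obtain ⟨δ₁, hδ₁pos, hδ₁⟩ := sign_near h21 hneg1 hd₁
    obtain ⟨δ₂, hδ₂pos, hδ₂⟩ := sign_near h22 hneg2 hd₂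
    -- pick t₁ ∈ (r₁, min (r₁+δ₁) r₂) with deriv g t₁ < 0
    obtain ⟨t₁, ht₁⟩ : ∃ t, r₁ < t ∧ t < min (r₁ + δ₁) r₂ := by
      have h1 : r₁ < min (r₁ + δ₁) r₂ := lt_min (by linarith) hlt
      exact ⟨(r₁ + min (r₁ + δ₁) r₂) / 2, by linarith, by linarith⟩
    have ht₁lt : t₁ < r₂ := lt_of_lt_of_le ht₁.2 (min_le_right _ _)
    have ht₁neg : deriv g t₁ < 0 := by
      refine (hδ₁ t₁ ?_).2 ht₁.1
      rw [abs_sub_lt_iff]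
      have := lt_of_lt_of_le ht₁.2 (min_le_left _ _)
      constructor <;> linarith [ht₁.1]
    -- pick t₂ ∈ (max (r₂ - δ₂) t₁, r₂) with deriv g t₂ > 0
    obtain ⟨t₂, ht₂⟩ : ∃ t, max (r₂ - δ₂) t₁ < t ∧ t < r₂ := by
      have h1 : max (r₂ - δ₂) t₁ < r₂ := max_lt (by linarith) ht₁lt
      exact ⟨(max (r₂ - δ₂) t₁ + r₂) / 2, by linarith, by linarith⟩
    have ht₂gt : t₁ < t₂ := lt_of_le_of_lt (le_max_right _ _) ht₂.1
    have ht₂pos : 0 < deriv g t₂ := by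
      refine (hδ₂ t₂ ?_).1 ht₂.2
      rw [abs_sub_lt_iff]
      have := lt_of_le_of_lt (le_max_left _ _) ht₂.1
      constructor <;> linarith [ht₂.2]
    -- Icc t₁ t₂ ⊆ Ioo a b
    have hsub : Set.Icc t₁ t₂ ⊆ Set.Ioo a b := by
      intro x hx
      exact ⟨lt_of_lt_of_le (lt_trans hr₁.1 ht₁.1) hx.1,
        lt_of_le_of_lt hx.2 (lt_trans ht₂.2 hr₂.2)⟩
    -- S = points of Icc t₁ t₂ where deriv g ≥ 0
    set S : Set ℝ := Set.Icc t₁ t₂ ∩ (deriv g) ⁻¹' Set.Ici 0 with hSdef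
    have hSclosed : IsClosed S :=
      ContinuousOn.preimage_isClosed_of_isClosed (hg'cont.mono hsub) isClosed_Icc
        isClosed_Ici
    have hScompact : IsCompact S :=
      (isCompact_Icc).of_isClosed_subset hSclosed Set.inter_subset_left
    have hSne : S.Nonempty := ⟨t₂, ⟨le_of_lt ht₂gt, le_refl _⟩, le_of_lt ht₂pos⟩
    obtain ⟨c, hcS, hcleast⟩ := hScompact.exists_isLeast hSne
    have hcIcc : c ∈ Set.Icc t₁ t₂ := hcS.1
    have hcge : 0 ≤ deriv g c := hcS.2
    have hct₁ : t₁ < c := by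
      rcases lt_or_eq_of_le hcIcc.1 with h | h
      · exact h
      · exact absurd (h ▸ hcge) (not_le.mpr ht₁neg)
    have hcmem : c ∈ Set.Ioo a b := hsub hcIcc
    -- find r with t₁ ≤ r < c and 0 ≤ deriv g r, contradicting minimality
    suffices hsuff : ∃ r, t₁ ≤ r ∧ r < c ∧ 0 ≤ deriv g r by
      obtain ⟨r, h1, h2, h3⟩ := hsuff
      have : r ∈ S := ⟨⟨h1, le_of_lt (lt_of_lt_of_le h2 hcIcc.2)⟩, h3⟩
      exact absurd (hcleast this) (not_le.mpr h2)
    rcases lt_or_eq_of_le hcge with hcpos | hczero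
    · -- deriv g c > 0 : use continuity
      have hcont : ContinuousAt (deriv g) c := (hg c hcmem).2.differentiableAt.continuousAt
      have hev : ∀ᶠ x in nhds c, 0 < deriv g x := hcont.eventually_const_lt hcpos
      obtain ⟨ε, hεpos, hε⟩ := Metric.eventually_nhds_iff.mp hev
      refine ⟨max t₁ ((c - ε/2) ⊔ ((t₁ + c)/2)), le_max_left _ _, ?_, ?_⟩
      · apply max_lt hct₁
        apply max_lt <;> linarith
      · apply le_of_lt
        apply hε
        rw [Real.dist_eq, abs_sub_lt_iff]
        constructor
        · have h1 : t₁ ≤ max t₁ ((c - ε/2) ⊔ ((t₁ + c)/2)) := le_max_left _ _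
          have h2 : max t₁ ((c - ε/2) ⊔ ((t₁ + c)/2)) < c :=
            max_lt hct₁ (max_lt (by linarith) (by linarith))
          linarith
        · have h1 : (c - ε/2) ≤ max t₁ ((c - ε/2) ⊔ ((t₁ + c)/2)) :=
            le_trans (le_max_left _ _) (le_max_right _ _)
          linarith
    · -- deriv g c = 0 : use sign_near at c
      have hdzero : deriv g c = 0 := hczero.symm
      obtain ⟨h2c, hnegc⟩ := second_deriv_neg n m hm f hlow g hg hcmem (hgpos c hcmem) hdzero
      obtain ⟨δ, hδpos, hδ⟩ := sign_near h2c hnegc hdzero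
      refine ⟨max t₁ ((c - δ/2) ⊔ ((t₁ + c)/2)), le_max_left _ _, ?_, ?_⟩
      · exact max_lt hct₁ (max_lt (by linarith) (by linarith))
      · apply le_of_lt
        refine (hδ _ ?_).1 (max_lt hct₁ (max_lt (by linarith) (by linarith)))
        rw [abs_sub_lt_iff]
        constructor
        · have h2 : max t₁ ((c - δ/2) ⊔ ((t₁ + c)/2)) < c :=
            max_lt hct₁ (max_lt (by linarith) (by linarith))
          linarith
        · have h1 : (c - δ/2) ≤ max t₁ ((c - δ/2) ⊔ ((t₁ + c)/2)) :=
            le_trans (le_max_left _ _) (le_max_right _ _)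
          linarith
  intro r₁ hr₁ r₂ hr₂ hd₁ hd₂
  rcases lt_trichotomy r₁ r₂ with h | h | h
  · exact absurd (key r₁ hr₁ r₂ hr₂ h hd₁ hd₂) not_false
  · exact h
  · exact absurd (key r₂ hr₂ r₁ hr₁ h hd₂ hd₁) not_false
end

section
/- Let g be a solution of equation (1.4) on an interval (0, b) with g(r) ≥ 0 and g'(r) ≥ 0 for all r ∈ (0, b). If g''(r₁) < 0 for some r₁ ∈ (0, b), then g''(r) < 0 for all r ∈ (0, r₁). -/
open Set Real

theorem monotoneOn_mul_exp_of_mul_le_deriv {Q Q' : ℝ → ℝ} {a b C : ℝ}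
    (hQ : ContinuousOn Q (Icc a b)) (hQ' : ∀ x ∈ Ioo a b, HasDerivAt Q (Q' x) x)
    (hle : ∀ x ∈ Ioo a b, C * Q x ≤ Q' x) :
    MonotoneOn (fun x => Q x * exp (-(C * x))) (Icc a b) := by
  refine monotoneOn_of_hasDerivWithinAt_nonneg (f' := fun x => (Q' x - C * Q x) * exp (-(C * x)))
    (convex_Icc a b) (hQ.mul (by fun_prop)) (fun x hx => ?_) (fun x hx => ?_)
  · rw [interior_Icc] at hx
    have hexp : HasDerivAt (fun x => exp (-(C * x))) (exp (-(C * x)) * -(C * 1)) x :=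
      ((hasDerivAt_id x).const_mul C).neg.exp
    exact (((hQ' x hx).mul hexp).congr_deriv (by ring)).hasDerivWithinAt
  · rw [interior_Icc] at hx
    exact mul_nonneg (sub_nonneg.2 (hle x hx)) (exp_pos _).le

theorem exists_nonneg_forall_Ioc_neg {Q : ℝ → ℝ} {a b : ℝ} (hab : a ≤ b)
    (hQ : ContinuousOn Q (Icc a b)) (ha : 0 ≤ Q a) :
    ∃ s ∈ Icc a b, 0 ≤ Q s ∧ ∀ x ∈ Ioc s b, Q x < 0 := by
  set S := Icc a b ∩ Q ⁻¹' Ici 0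
  have hS : sSup S ∈ S :=
    (hQ.preimage_isClosed_of_isClosed isClosed_Icc isClosed_Ici).csSup_mem
      ⟨a, ⟨le_rfl, hab⟩, ha⟩ ⟨b, fun x hx => hx.1.2⟩
  refine ⟨sSup S, hS.1, hS.2, fun x hx => not_le.1 fun hQx => ?_⟩
  have hxS : x ∈ S := ⟨⟨hS.1.1.trans hx.1.le, hx.2⟩, hQx⟩
  exact hx.1.not_ge (le_csSup ⟨b, fun y hy => hy.1.2⟩ hxS)

theorem neg_of_neg_of_mul_le_deriv {Q Q' c : ℝ → ℝ} {a b : ℝ} (hab : a ≤ b)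
    (hQ : ContinuousOn Q (Icc a b)) (hQ' : ∀ x ∈ Ioo a b, HasDerivAt Q (Q' x) x)
    (hc : ContinuousOn c (Icc a b)) (hle : ∀ x ∈ Ioo a b, c x * Q x ≤ Q' x) (hb : Q b < 0) :
    Q a < 0 := by
  by_contra! ha
  obtain ⟨s, hs, hQs, hneg⟩ := exists_nonneg_forall_Ioc_neg hab hQ ha
  have hsub : Ioo s b ⊆ Ioo a b := Ioo_subset_Ioo_left hs.1
  obtain ⟨C, hC⟩ := isCompact_Icc.bddAbove_image (hc.mono (Icc_subset_Icc_left hs.1))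
  have hmono := monotoneOn_mul_exp_of_mul_le_deriv (C := C)
    (hQ.mono (Icc_subset_Icc_left hs.1)) (fun x hx => hQ' x (hsub hx)) fun x hx =>
      (mul_le_mul_of_nonpos_right (hC ⟨x, Ioo_subset_Icc_self hx, rfl⟩)
        (hneg x (Ioo_subset_Ioc_self hx)).le).trans (hle x (hsub hx))
  have hsb := hmono (left_mem_Icc.2 hs.2) (right_mem_Icc.2 hs.2) hs.2
  exact ((mul_nonneg hQs (exp_pos _).le).trans hsb).not_gt
    (mul_neg_of_neg_of_pos hb (exp_pos _))

noncomputable def eq14Factor (n : ℕ) (f g : ℝ → ℝ) (r : ℝ) : ℝ :=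
  (r / 2 * deriv f (r ^ 2 + g r ^ 2) - ((n : ℝ) - 1) / r) * deriv g r
    - deriv f (r ^ 2 + g r ^ 2) / 2 * g r

noncomputable def eq14FactorDeriv (n : ℕ) (f g : ℝ → ℝ) (r : ℝ) : ℝ :=
  (r / 2 * deriv f (r ^ 2 + g r ^ 2) - ((n : ℝ) - 1) / r) * (1 + deriv g r ^ 2)
      * eq14Factor n f g r
    + ((n : ℝ) - 1) * deriv g r / r ^ 2
    + deriv (deriv f) (r ^ 2 + g r ^ 2) * (r + g r * deriv g r) * (r * deriv g r - g r)

noncomputable def eq14Coeff (n : ℕ) (f g : ℝ → ℝ) (r : ℝ) : ℝ :=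
  (r / 2 * deriv f (r ^ 2 + g r ^ 2) - ((n : ℝ) - 1) / r) * (1 + deriv g r ^ 2)
    + 2 * deriv (deriv f) (r ^ 2 + g r ^ 2) * (r + g r * deriv g r) / deriv f (r ^ 2 + g r ^ 2)

section

variable {n : ℕ} {f g : ℝ → ℝ} {I : Set ℝ} {r : ℝ}

theorem eq14Coeff_mul_eq14Factor_le (hn : 1 ≤ n) (hr : 0 < r) (hg : 0 ≤ g r)
    (hg' : 0 ≤ deriv g r) (hF : 0 < deriv f (r ^ 2 + g r ^ 2))
    (hF' : 0 ≤ deriv (deriv f) (r ^ 2 + g r ^ 2)) :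
    eq14Coeff n f g r * eq14Factor n f g r ≤ eq14FactorDeriv n f g r := by
  have hn' : (0 : ℝ) ≤ (n : ℝ) - 1 := sub_nonneg.2 (by exact_mod_cast hn)
  -- `r g' - g = (2 / f') (Q + (n - 1) g' / r)`
  have hsplit : eq14FactorDeriv n f g r = eq14Coeff n f g r * eq14Factor n f g r
      + ((n : ℝ) - 1) * deriv g r / r ^ 2 * (1 + 2 * deriv (deriv f) (r ^ 2 + g r ^ 2)
        * (r + g r * deriv g r) * r / deriv f (r ^ 2 + g r ^ 2)) := by
    unfold eq14FactorDeriv eq14Coeff eq14Factor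
    field_simp
    ring
  rw [hsplit, le_add_iff_nonneg_right]
  positivity

namespace SolvesEq14

theorem deriv_deriv_eq (hg : SolvesEq14 n f g I) (hr : r ∈ I) :
    deriv (deriv g) r = (1 + deriv g r ^ 2) * eq14Factor n f g r :=
  (hg r hr).2.deriv

theorem hasDerivAt_eq14Factor (hg : SolvesEq14 n f g I) (hr : r ∈ I) (hr0 : r ≠ 0)
    (hf : Differentiable ℝ (deriv f)) :
    HasDerivAt (eq14Factor n f g) (eq14FactorDeriv n f g r) r := by
  obtain ⟨hg1, hg2⟩ := hg r hr
  have hF : HasDerivAt (fun x => deriv f (x ^ 2 + g x ^ 2))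
      (deriv (deriv f) (r ^ 2 + g r ^ 2) * (2 * r + 2 * g r * deriv g r)) r := by
    refine (hf _).hasDerivAt.comp r (((hasDerivAt_pow 2 r).add (hg1.pow 2)).congr_deriv ?_)
    push_cast
    ring
  have hA : HasDerivAt (fun x => x / 2 * deriv f (x ^ 2 + g x ^ 2) - ((n : ℝ) - 1) / x)
      (1 / 2 * deriv f (r ^ 2 + g r ^ 2)
        + r / 2 * (deriv (deriv f) (r ^ 2 + g r ^ 2) * (2 * r + 2 * g r * deriv g r))
        + ((n : ℝ) - 1) / r ^ 2) r :=
    ((((hasDerivAt_id' r).div_const 2).mul hF).sub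
      ((hasDerivAt_inv hr0).const_mul ((n : ℝ) - 1))).congr_deriv (by ring)
  refine ((hA.mul hg2).sub ((hF.div_const 2).mul hg1)).congr_deriv ?_
  unfold eq14FactorDeriv eq14Factor
  ring

theorem continuousAt_eq14Coeff (hg : SolvesEq14 n f g I) (hr : r ∈ I) (hr0 : r ≠ 0)
    (hf' : Continuous (deriv f)) (hf'' : Continuous (deriv (deriv f)))
    (hF : deriv f (r ^ 2 + g r ^ 2) ≠ 0) :
    ContinuousAt (eq14Coeff n f g) r := by
  have hg0 := (hg r hr).1.continuousAt
  have hg1 := (hg r hr).2.continuousAt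
  unfold eq14Coeff
  fun_prop (disch := assumption)

end SolvesEq14

end

theorem concavity_propagates_left_general
    (n : ℕ) (hn : 2 ≤ n) (m : ℝ) (hm : 0 < m)
    (f : ℝ → ℝ) (hf : ContDiff ℝ 2 f)
    (hconv : ∀ s : ℝ, 0 ≤ deriv (deriv f) s)
    (hlow : ∀ s : ℝ, m ≤ deriv f s)
    (b : ℝ) (g : ℝ → ℝ) (hg : SolvesEq14 n f g (Set.Ioo 0 b))
    (hg0 : ∀ r ∈ Set.Ioo (0 : ℝ) b, 0 ≤ g r)
    (hg0' : ∀ r ∈ Set.Ioo (0 : ℝ) b, 0 ≤ deriv g r)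
    (r₁ : ℝ) (hr₁ : r₁ ∈ Set.Ioo (0 : ℝ) b)
    (hconc : deriv (deriv g) r₁ < 0) :
    ∀ r ∈ Set.Ioo (0 : ℝ) r₁, deriv (deriv g) r < 0 := by
  intro r hr
  have hf' : ContDiff ℝ 1 (deriv f) := hf.deriv'
  have hF : ∀ s, 0 < deriv f s := fun s => hm.trans_le (hlow s)
  have hI : Icc r r₁ ⊆ Ioo 0 b := Icc_subset_Ioo hr.1 hr₁.2
  have hQ' : ∀ x ∈ Icc r r₁, HasDerivAt (eq14Factor n f g) (eq14FactorDeriv n f g x) x :=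
    fun x hx => hg.hasDerivAt_eq14Factor (hI hx) (hI hx).1.ne' (hf'.differentiable one_ne_zero)
  have hc : ContinuousOn (eq14Coeff n f g) (Icc r r₁) := fun x hx =>
    (hg.continuousAt_eq14Coeff (hI hx) (hI hx).1.ne' (hf.continuous_deriv one_le_two)
      (hf'.continuous_deriv le_rfl) (hF _).ne').continuousWithinAt
  have hle : ∀ x ∈ Ioo r r₁, eq14Coeff n f g x * eq14Factor n f g x ≤ eq14FactorDeriv n f g x :=
    fun x hx => have hx' := hI (Ioo_subset_Icc_self hx)
      eq14Coeff_mul_eq14Factor_le (by omega) hx'.1 (hg0 x hx') (hg0' x hx') (hF _) (hconv _)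
  have hQr₁ : eq14Factor n f g r₁ < 0 :=
    neg_of_mul_neg_right (hg.deriv_deriv_eq hr₁ ▸ hconc) (by positivity)
  have hQr : eq14Factor n f g r < 0 :=
    neg_of_neg_of_mul_le_deriv hr.2.le (fun x hx => (hQ' x hx).continuousAt.continuousWithinAt)
      (fun x hx => hQ' x (Ioo_subset_Icc_self hx)) hc hle hQr₁
  rw [hg.deriv_deriv_eq ⟨hr.1, hr.2.trans hr₁.2⟩]
  exact mul_neg_of_pos_of_neg (by positivity) hQr

/-- If `g ≥ 0`, `g' ≥ 0` on `(0, b)` and `g''(r₁) < 0` for some `r₁ ∈ (0, b)`, then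
`g'' < 0` on all of `(0, r₁)`. -/
theorem concavity_propagates_left
    (n : ℕ) (hn : 2 ≤ n) (m M : ℝ) (hm : 0 < m) (hmM : m ≤ M)
    (f : ℝ → ℝ) (hf : ContDiff ℝ 2 f)
    (hconv : ∀ s : ℝ, 0 ≤ deriv (deriv f) s)
    (hlow : ∀ s : ℝ, m ≤ deriv f s) (hup : ∀ s : ℝ, deriv f s ≤ M)
    (b : ℝ) (g : ℝ → ℝ) (hg : SolvesEq14 n f g (Set.Ioo 0 b))
    (hg0 : ∀ r ∈ Set.Ioo (0 : ℝ) b, 0 ≤ g r)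
    (hg0' : ∀ r ∈ Set.Ioo (0 : ℝ) b, 0 ≤ deriv g r)
    (r₁ : ℝ) (hr₁ : r₁ ∈ Set.Ioo (0 : ℝ) b)
    (hconc : deriv (deriv g) r₁ < 0) :
    ∀ r ∈ Set.Ioo (0 : ℝ) r₁, deriv (deriv g) r < 0 :=
  concavity_propagates_left_general n hn m hm f hf hconv hlow b g hg hg0 hg0' r₁ hr₁ hconc
end

section
/- Set b = √(2(n−1)/M). For every ε > 0 there exists a₀ ∈ (0, b) such that for every a ∈ (0, a₀) the following holds: if g : [a, b) → ℝ is a solution of equation (1.4) on (a, b), continuous at a, with g(a) > 0, g'(a) > 0, and g > 0 on [a, b), then there exists ā ∈ (a, b) with g'(ā) = 0, and the smallest such ā satisfies ā < ε. -/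
/-!
If `g, g' > 0` on `(a, c)`, the weight `W = r^(n-1) g'/g` satisfies, for `c` small, the Riccati
inequality `W' ≤ -W²/(2 r^(n-1)) - (m/4) r^(n-1)`: the bracket in (1.4) is negative once
`r² M ≤ 2(n-1)`, i.e. `r ≤ b`, and the cross term is absorbed by AM-GM once `r² M² ≤ 2m`.
Integrating the linear part over `[c/2, 3c/4]` bounds `W(c/2)` below by a constant `L(c)`, and
integrating `(1/W)' ≥ 1/(2r)` over `[2a, c/2]` gives `log (c/(4a)) ≤ 2/L(c)`. So for
`a < (c/4) e^(-2/L(c))` the derivative `g'` becomes nonpositive before `c`; since `g'(a⁺) > 0`,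
Darboux's theorem gives a zero of `g'` in `(a, c)`.
-/

open Set Real

/-- `SolvesEq14 n f g I` is definitionally
`SolvesRadialEq (n - 1) (fun r => deriv f (r ^ 2 + g r ^ 2)) g I`. -/
def SolvesRadialEq (p : ℝ) (F g : ℝ → ℝ) (I : Set ℝ) : Prop :=
  ∀ r ∈ I,
    HasDerivAt g (deriv g r) r ∧
    HasDerivAt (deriv g)
      ((1 + deriv g r ^ 2) * ((r / 2 * F r - p / r) * deriv g r - F r / 2 * g r)) r

noncomputable def radialWeight (p : ℝ) (g : ℝ → ℝ) (r : ℝ) : ℝ := r ^ p * (deriv g r / g r)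

/-- The lower bound for `radialWeight p g (c / 2)` obtained by integrating `W' ≤ -(m/4) r^p`
over `[c/2, 3c/4]`. -/
noncomputable def radialWeightDrop (p m c : ℝ) : ℝ :=
  m / 4 / (p + 1) * ((3 * c / 4) ^ (p + 1) - (c / 2) ^ (p + 1))

noncomputable def radialThreshold (p m c : ℝ) : ℝ := c / 4 * exp (-(2 / radialWeightDrop p m c))

lemma radialWeightDrop_pos {p m c : ℝ} (hp : 0 ≤ p) (hm : 0 < m) (hc : 0 < c) :
    0 < radialWeightDrop p m c := by
  have : (c / 2) ^ (p + 1) < (3 * c / 4) ^ (p + 1) :=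
    rpow_lt_rpow (by positivity) (by linarith) (by linarith)
  unfold radialWeightDrop
  exact mul_pos (by positivity) (by linarith)

lemma radialThreshold_pos {p m c : ℝ} (hc : 0 < c) : 0 < radialThreshold p m c := by
  unfold radialThreshold
  positivity

lemma radialThreshold_lt {p m c : ℝ} (hp : 0 ≤ p) (hm : 0 < m) (hc : 0 < c) :
    radialThreshold p m c < c / 4 := by
  have : exp (-(2 / radialWeightDrop p m c)) < 1 :=
    exp_lt_one_iff.2 (neg_neg_of_pos (div_pos two_pos (radialWeightDrop_pos hp hm hc)))
  unfold radialThreshold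
  nlinarith

lemma sub_le_sub_of_hasDerivAt_le {f φ : ℝ → ℝ} {s t : ℝ} (hst : s ≤ t)
    (h : ∀ x ∈ Icc s t, ∃ d e, HasDerivAt f d x ∧ HasDerivAt φ e x ∧ d ≤ e) :
    f t - f s ≤ φ t - φ s := by
  choose! d e hd he hde using h
  have hmono : MonotoneOn (φ - f) (Icc s t) :=
    monotoneOn_of_hasDerivWithinAt_nonneg (f' := e - d) (convex_Icc s t)
      (fun x hx => ((he x hx).sub (hd x hx)).continuousAt.continuousWithinAt)
      (fun x hx => by
        rw [interior_Icc] at hx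
        have hx := Ioo_subset_Icc_self hx
        exact ((he x hx).sub (hd x hx)).hasDerivWithinAt)
      (fun x hx => by
        rw [interior_Icc] at hx
        exact sub_nonneg.2 (hde x (Ioo_subset_Icc_self hx)))
  have := hmono (left_mem_Icc.2 hst) (right_mem_Icc.2 hst) hst
  simp only [Pi.sub_apply] at this
  linarith

lemma sub_le_of_hasDerivAt_le_neg_rpow {W : ℝ → ℝ} {p κ s t : ℝ} (hp : 0 ≤ p) (hst : s ≤ t)
    (hW : ∀ x ∈ Icc s t, ∃ d, HasDerivAt W d x ∧ d ≤ -(κ * x ^ p)) :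
    W t - W s ≤ -(κ / (p + 1) * (t ^ (p + 1) - s ^ (p + 1))) := by
  have := sub_le_sub_of_hasDerivAt_le (φ := fun x => -(κ / (p + 1) * x ^ (p + 1))) hst
    fun x hx => by
      obtain ⟨d, hd, hdle⟩ := hW x hx
      have hpow := (hasDerivAt_rpow_const (x := x) (p := p + 1) (Or.inr (by linarith))).const_mul
        (κ / (p + 1))
      refine ⟨d, _, hd, hpow.neg, ?_⟩
      rw [add_sub_cancel_right, ← mul_assoc, div_mul_cancel₀ _ (by linarith)]
      exact hdle
  linarith

lemma log_sub_log_le_of_hasDerivAt_le {W : ℝ → ℝ} {s t : ℝ} (hs : 0 < s) (hst : s ≤ t)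
    (hW : ∀ x ∈ Icc s t, 0 < W x ∧ ∃ d, HasDerivAt W d x ∧ d ≤ -(W x ^ 2 / (2 * x))) :
    log t - log s ≤ 2 / W t - 2 / W s :=
  sub_le_sub_of_hasDerivAt_le (φ := fun x => 2 / W x) hst fun x hx => by
    obtain ⟨hWx, d, hd, hdle⟩ := hW x hx
    have hx : 0 < x := hs.trans_le hx.1
    refine ⟨_, _, hasDerivAt_log hx.ne', (hasDerivAt_const x 2).div hd hWx.ne', ?_⟩
    have hsplit : x⁻¹ * W x ^ 2 = 2 * (W x ^ 2 / (2 * x)) := by field_simp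
    rw [le_div_iff₀ (by positivity)]
    linarith

lemma radialThreshold_le_of_riccati {W : ℝ → ℝ} {p m a c : ℝ} (hp : 1 ≤ p) (hm : 0 < m)
    (ha : 0 < a) (hac : 4 * a < c) (hc : c ≤ 1)
    (hW : ∀ x ∈ Ioo a c, 0 < W x ∧
      ∃ d, HasDerivAt W d x ∧ d ≤ -(W x ^ 2 / (2 * x ^ p) + m / 4 * x ^ p)) :
    radialThreshold p m c ≤ a := by
  have hc0 : 0 < c := by linarith
  have hL := radialWeightDrop_pos (p := p) (by linarith) hm hc0
  have hdrop : radialWeightDrop p m c ≤ W (c / 2) := by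
    have := sub_le_of_hasDerivAt_le_neg_rpow (W := W) (p := p) (κ := m / 4) (s := c / 2)
      (t := 3 * c / 4) (by linarith) (by linarith) fun x hx => by
        obtain ⟨-, d, hd, hdle⟩ := hW x ⟨by linarith [hx.1], by linarith [hx.2]⟩
        have : 0 ≤ W x ^ 2 / (2 * x ^ p) := by
          have : 0 < x := by linarith [hx.1]
          positivity
        exact ⟨d, hd, by linarith⟩
    have := (hW (3 * c / 4) ⟨by linarith, by linarith⟩).1
    unfold radialWeightDrop
    linarith
  have hlog : log (c / 2) - log (2 * a) ≤ 2 / W (c / 2) - 2 / W (2 * a) :=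
    log_sub_log_le_of_hasDerivAt_le (by linarith) (by linarith) fun x hx => by
      have hx0 : 0 < x := by linarith [hx.1]
      obtain ⟨hWx, d, hd, hdle⟩ := hW x ⟨by linarith [hx.1], by linarith [hx.2]⟩
      have hxp : x ^ p ≤ x := rpow_le_self_of_le_one hx0.le (by linarith [hx.2]) hp
      have : W x ^ 2 / (2 * x) ≤ W x ^ 2 / (2 * x ^ p) :=
        div_le_div_of_nonneg_left (by positivity) (by positivity) (by linarith)
      have : 0 ≤ m / 4 * x ^ p := by positivity
      exact ⟨hWx, d, hd, by linarith⟩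
  have h2a := (hW (2 * a) ⟨by linarith, by linarith⟩).1
  have hlog' : log (c / (4 * a)) ≤ 2 / radialWeightDrop p m c := by
    have : 2 / W (c / 2) ≤ 2 / radialWeightDrop p m c :=
      div_le_div_of_nonneg_left (by norm_num) hL hdrop
    have : 0 < 2 / W (2 * a) := by positivity
    rw [show c / (4 * a) = (c / 2) / (2 * a) by field_simp; ring,
      log_div (by positivity) (by positivity)]
    linarith
  rw [log_le_iff_le_exp (by positivity), div_le_iff₀ (by positivity)] at hlog'
  rw [radialThreshold, exp_neg, ← div_eq_mul_inv, div_le_iff₀ (exp_pos _)]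
  linarith

lemma radialEq_rhs_le {p m M F x P Q : ℝ} (hm : 0 ≤ m) (hmF : m ≤ F) (hFM : F ≤ M) (hx : 0 < x)
    (hxM : x ^ 2 * M ≤ 2 * p) (hP : 0 ≤ P) (hQ : 0 ≤ Q) :
    (1 + P ^ 2) * ((x / 2 * F - p / x) * P - F / 2 * Q) ≤
      (x / 2 * M - p / x) * P - m / 2 * Q := by
  have hcoef : x / 2 * M - p / x ≤ 0 := by
    rw [sub_nonpos, le_div_iff₀ hx]
    linarith
  have hB : (x / 2 * F - p / x) * P - F / 2 * Q ≤ (x / 2 * M - p / x) * P - m / 2 * Q := by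
    nlinarith [mul_le_mul_of_nonneg_left hFM (mul_nonneg hx.le hP)]
  have hB0 : (x / 2 * M - p / x) * P - m / 2 * Q ≤ 0 := by
    nlinarith [mul_nonneg hm hQ]
  nlinarith [mul_nonneg (sq_nonneg P) (by linarith : 0 ≤ -((x / 2 * F - p / x) * P - F / 2 * Q))]

lemma hasDerivAt_radialWeight {p E x : ℝ} {g : ℝ → ℝ} (hx : 0 < x)
    (hg : HasDerivAt g (deriv g x) x) (hg' : HasDerivAt (deriv g) E x) (hgx : g x ≠ 0) :
    HasDerivAt (radialWeight p g)
      (x ^ p * (p / x * (deriv g x / g x) + E / g x - (deriv g x / g x) ^ 2)) x := by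
  refine ((hasDerivAt_rpow_const (Or.inl hx.ne')).mul (hg'.div hg hgx)).congr_deriv ?_
  rw [rpow_sub_one hx.ne', Pi.div_apply]
  field_simp
  ring

lemma SolvesRadialEq.hasDerivAt_radialWeight_le {p m M : ℝ} {F g : ℝ → ℝ} {I : Set ℝ} {x : ℝ}
    (hsol : SolvesRadialEq p F g I) (hxI : x ∈ I) (hx : 0 < x) (hm : 0 ≤ m) (hF : F x ∈ Icc m M)
    (hxM : x ^ 2 * M ≤ 2 * p) (hxm : x ^ 2 * M ^ 2 ≤ 2 * m) (hg : 0 < g x) (hg' : 0 < deriv g x) :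
    ∃ d, HasDerivAt (radialWeight p g) d x ∧
      d ≤ -(radialWeight p g x ^ 2 / (2 * x ^ p) + m / 4 * x ^ p) := by
  obtain ⟨hgd, hgdd⟩ := hsol x hxI
  refine ⟨_, hasDerivAt_radialWeight hx hgd hgdd hg.ne', ?_⟩
  have hE := radialEq_rhs_le hm hF.1 hF.2 hx hxM hg'.le hg.le
  set u := deriv g x / g x with hu
  have hEu : ((1 + deriv g x ^ 2) * ((x / 2 * F x - p / x) * deriv g x - F x / 2 * g x)) / g x
      ≤ (x / 2 * M - p / x) * u - m / 2 := by
    rw [div_le_iff₀ hg]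
    refine hE.trans_eq ?_
    rw [hu]
    field_simp
  have hamgm : p / x * u + (x / 2 * M - p / x) * u - m / 2 - u ^ 2 ≤ -(u ^ 2 / 2 + m / 4) := by
    nlinarith [sq_nonneg (u - x * M / 2)]
  have hxp : 0 < x ^ p := rpow_pos_of_pos hx p
  calc _ ≤ x ^ p * (-(u ^ 2 / 2 + m / 4)) :=
        mul_le_mul_of_nonneg_left (by linarith) hxp.le
    _ = _ := by
        simp only [radialWeight, ← hu]
        field_simp

lemma SolvesRadialEq.exists_deriv_nonpos_of_lt_radialThreshold {p m M a c : ℝ} {F g : ℝ → ℝ}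
    (hsol : SolvesRadialEq p F g (Ioo a c)) (hp : 1 ≤ p) (hm : 0 < m)
    (hF : ∀ x ∈ Ioo a c, F x ∈ Icc m M) (ha : 0 < a) (hc : c ≤ 1)
    (hcM : c ^ 2 * M ≤ 2 * p) (hcm : c ^ 2 * M ^ 2 ≤ 2 * m) (hg : ∀ x ∈ Ioo a c, 0 < g x)
    (hac : a < radialThreshold p m c) :
    ∃ x ∈ Ioo a c, deriv g x ≤ 0 := by
  by_contra! hg'
  have hc0 : 0 < c := by
    by_contra! hc0
    have : radialThreshold p m c ≤ 0 := by
      unfold radialThreshold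
      exact mul_nonpos_of_nonpos_of_nonneg (by linarith) (exp_pos _).le
    linarith
  have hac4 : 4 * a < c := by linarith [radialThreshold_lt (p := p) (by linarith) hm hc0]
  refine (not_le.2 hac) (radialThreshold_le_of_riccati (W := radialWeight p g) hp hm ha hac4 hc
    fun x hx => ?_)
  have hx0 : 0 < x := ha.trans hx.1
  have hM : 0 ≤ M := hm.le.trans ((hF x hx).1.trans (hF x hx).2)
  have hxc : x ^ 2 ≤ c ^ 2 := pow_le_pow_left₀ hx0.le hx.2.le 2
  refine ⟨mul_pos (rpow_pos_of_pos hx0 p) (div_pos (hg' x hx) (hg x hx)), ?_⟩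
  exact hsol.hasDerivAt_radialWeight_le hx hx0 hm.le (hF x hx)
    ((mul_le_mul_of_nonneg_right hxc hM).trans hcM)
    ((mul_le_mul_of_nonneg_right hxc (sq_nonneg M)).trans hcm) (hg x hx) (hg' x hx)

lemma exists_mem_Ioc_deriv_eq_zero {g : ℝ → ℝ} {a r d : ℝ} (har : a < r) (hd : 0 < d)
    (hga : HasDerivWithinAt g d (Ici a) a) (hg : ∀ x ∈ Ioc a r, HasDerivAt g (deriv g x) x)
    (hr : deriv g r ≤ 0) : ∃ z ∈ Ioc a r, deriv g z = 0 := by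
  rcases hr.eq_or_lt with hr | hr
  · exact ⟨r, right_mem_Ioc.2 har, hr⟩
  have hderiv : ∀ x ∈ Icc a r,
      HasDerivWithinAt g (Function.update (deriv g) a d x) (Icc a r) x := by
    intro x hx
    rcases hx.1.eq_or_lt with rfl | hax
    · simpa using hga.mono Icc_subset_Ici_self
    · simpa [hax.ne'] using (hg x ⟨hax, hx.2⟩).hasDerivWithinAt
  obtain ⟨z, hz, hz0⟩ := exists_hasDerivWithinAt_eq_of_lt_of_gt har.le hderiv (m := 0)
    (by simpa using hd) (by simpa [har.ne'] using hr)
  exact ⟨z, Ioo_subset_Ioc_self hz, by simpa [hz.1.ne'] using hz0⟩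

lemma SolvesRadialEq.exists_deriv_eq_zero_of_lt_radialThreshold {p m M a c d : ℝ}
    {F g : ℝ → ℝ} (hsol : SolvesRadialEq p F g (Ioo a c)) (hp : 1 ≤ p) (hm : 0 < m)
    (hF : ∀ x ∈ Ioo a c, F x ∈ Icc m M) (ha : 0 < a) (hc : c ≤ 1)
    (hcM : c ^ 2 * M ≤ 2 * p) (hcm : c ^ 2 * M ^ 2 ≤ 2 * m) (hg : ∀ x ∈ Ioo a c, 0 < g x)
    (hac : a < radialThreshold p m c) (hd : 0 < d) (hga : HasDerivWithinAt g d (Ici a) a) :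
    ∃ z ∈ Ioo a c, deriv g z = 0 := by
  obtain ⟨r, hr, hr0⟩ :=
    hsol.exists_deriv_nonpos_of_lt_radialThreshold hp hm hF ha hc hcM hcm hg hac
  obtain ⟨z, hz, hz0⟩ := exists_mem_Ioc_deriv_eq_zero hr.1 hd hga
    (fun x hx => (hsol x ⟨hx.1, hx.2.trans_lt hr.2⟩).1) hr0
  exact ⟨z, ⟨hz.1, hz.2.trans_lt hr.2⟩, hz0⟩

theorem critical_point_near_origin_general
    (n : ℕ) (hn : 2 ≤ n) (m M : ℝ) (hm : 0 < m) (hmM : m ≤ M)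
    (f : ℝ → ℝ)
    (hlow : ∀ s : ℝ, m ≤ deriv f s) (hup : ∀ s : ℝ, deriv f s ≤ M)
    (b : ℝ) (hb : b = Real.sqrt (2 * ((n : ℝ) - 1) / M)) :
    ∀ ε : ℝ, 0 < ε →
      ∃ a₀ ∈ Set.Ioo (0 : ℝ) b, ∀ a ∈ Set.Ioo (0 : ℝ) a₀,
        ∀ g : ℝ → ℝ,
          ContinuousWithinAt g (Set.Ici a) a →
          SolvesEq14 n f g (Set.Ioo a b) →
          0 < g a →
          (∃ d : ℝ, 0 < d ∧ HasDerivWithinAt g d (Set.Ici a) a) →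
          (∀ r ∈ Set.Ico a b, 0 < g r) →
          ({r : ℝ | r ∈ Set.Ioo a b ∧ deriv g r = 0}).Nonempty ∧
          sInf {r : ℝ | r ∈ Set.Ioo a b ∧ deriv g r = 0} < ε := by
  intro ε hε
  set p : ℝ := n - 1
  have hp : 1 ≤ p := by
    have : (2 : ℝ) ≤ n := by exact_mod_cast hn
    linarith
  have hM : 0 < M := hm.trans_le hmM
  set c := min (min ε 1) (min b (√(2 * m) / M))
  have hc0 : 0 < c := lt_min (lt_min hε one_pos) (lt_min (by rw [hb]; positivity) (by positivity))
  have hcε : c ≤ ε := (min_le_left _ _).trans (min_le_left _ _)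
  have hc1 : c ≤ 1 := (min_le_left _ _).trans (min_le_right _ _)
  have hcb : c ≤ b := (min_le_right _ _).trans (min_le_left _ _)
  have hcM : c ^ 2 * M ≤ 2 * p := by
    have := (le_sqrt hc0.le (by positivity)).1 (hb ▸ hcb)
    rwa [le_div_iff₀ hM] at this
  have hcm : c ^ 2 * M ^ 2 ≤ 2 * m := by
    have := (le_div_iff₀ hM).1 ((min_le_right _ _).trans (min_le_right _ _) : c ≤ √(2 * m) / M)
    have h := (le_sqrt (by positivity) (by positivity)).1 this
    rwa [mul_pow] at h
  refine ⟨radialThreshold p m c, ⟨radialThreshold_pos hc0, ?_⟩, ?_⟩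
  · linarith [radialThreshold_lt (p := p) (by linarith) hm hc0]
  rintro a ⟨ha, ha₀⟩ g - hsol - ⟨d, hd, hgd⟩ hg
  have hsol' : SolvesRadialEq p (fun r => deriv f (r ^ 2 + g r ^ 2)) g (Ioo a c) :=
    fun x hx => hsol x ⟨hx.1, hx.2.trans_le hcb⟩
  obtain ⟨z, hz, hz0⟩ := hsol'.exists_deriv_eq_zero_of_lt_radialThreshold hp hm
    (fun x _ => ⟨hlow _, hup _⟩) ha hc1 hcM hcm
    (fun x hx => hg x ⟨hx.1.le, hx.2.trans_le hcb⟩) ha₀ hd hgd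
  have hzS : z ∈ {r : ℝ | r ∈ Ioo a b ∧ deriv g r = 0} := ⟨⟨hz.1, hz.2.trans_le hcb⟩, hz0⟩
  exact ⟨⟨z, hzS⟩, (csInf_le ⟨a, fun y hy => hy.1.1.le⟩ hzS).trans_lt (hz.2.trans_le hcε)⟩

/-- Any positive increasing solution of (1.4) starting at a sufficiently small `a > 0`
must have a first critical point `ā ∈ (a, √(2(n-1)/M))`, and `ā → 0` as `a → 0`. -/
theorem critical_point_near_origin
    (n : ℕ) (hn : 2 ≤ n) (m M : ℝ) (hm : 0 < m) (hmM : m ≤ M)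
    (f : ℝ → ℝ) (hf : ContDiff ℝ 2 f)
    (hconv : ∀ s : ℝ, 0 ≤ deriv (deriv f) s)
    (hlow : ∀ s : ℝ, m ≤ deriv f s) (hup : ∀ s : ℝ, deriv f s ≤ M)
    (b : ℝ) (hb : b = Real.sqrt (2 * ((n : ℝ) - 1) / M)) :
    ∀ ε : ℝ, 0 < ε →
      ∃ a₀ ∈ Set.Ioo (0 : ℝ) b, ∀ a ∈ Set.Ioo (0 : ℝ) a₀,
        ∀ g : ℝ → ℝ,
          ContinuousWithinAt g (Set.Ici a) a →
          SolvesEq14 n f g (Set.Ioo a b) →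
          0 < g a →
          (∃ d : ℝ, 0 < d ∧ HasDerivWithinAt g d (Set.Ici a) a) →
          (∀ r ∈ Set.Ico a b, 0 < g r) →
          ({r : ℝ | r ∈ Set.Ioo a b ∧ deriv g r = 0}).Nonempty ∧
          sInf {r : ℝ | r ∈ Set.Ioo a b ∧ deriv g r = 0} < ε :=
  critical_point_near_origin_general n hn m M hm hmM f hlow hup b hb
end

section
/- There do not exist a > 0 and a solution g of equation (1.4) on (0, a) such that g(r) > 0 and g'(r) > 0 for all r ∈ (0, a), lim_{r→0⁺} g(r) = 0, and lim_{r→0⁺} g'(r) exists in [0, +∞] (i.e. g' tends to a finite nonnegative limit or to +∞). In other words, no such solution curve can reach the origin. -/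
/-- No positive increasing solution of (1.4) on `(0, a)` can reach the origin with
`g'` tending to a finite nonnegative limit or to `+∞`. -/
theorem no_solution_reaching_origin
    (n : ℕ) (hn : 2 ≤ n) (m M : ℝ) (hm : 0 < m) (hmM : m ≤ M)
    (f : ℝ → ℝ) (hf : ContDiff ℝ 2 f)
    (hconv : ∀ s : ℝ, 0 ≤ deriv (deriv f) s)
    (hlow : ∀ s : ℝ, m ≤ deriv f s) (hup : ∀ s : ℝ, deriv f s ≤ M) :
    ¬ ∃ (a : ℝ) (g : ℝ → ℝ), 0 < a ∧
        SolvesEq14 n f g (Set.Ioo 0 a) ∧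
        (∀ r ∈ Set.Ioo (0 : ℝ) a, 0 < g r) ∧
        (∀ r ∈ Set.Ioo (0 : ℝ) a, 0 < deriv g r) ∧
        Filter.Tendsto g (nhdsWithin 0 (Set.Ioi 0)) (nhds 0) ∧
        ((∃ c : ℝ, 0 ≤ c ∧
            Filter.Tendsto (deriv g) (nhdsWithin 0 (Set.Ioi 0)) (nhds c)) ∨
          Filter.Tendsto (deriv g) (nhdsWithin 0 (Set.Ioi 0)) Filter.atTop) := by
  rintro ⟨a, g, ha, hsol, hgpos, hg'pos, -, -⟩
  have hM : (0:ℝ) < M := lt_of_lt_of_le hm hmM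
  have hn1 : (1:ℝ) ≤ (n:ℝ) - 1 := by
    have : (2:ℝ) ≤ (n:ℝ) := by exact_mod_cast hn
    linarith
  -- the "slope" function E from the right-hand side of (1.4)
  set E : ℝ → ℝ := fun r =>
    (r / 2 * deriv f (r ^ 2 + g r ^ 2) - ((n : ℝ) - 1) / r) * deriv g r
      - deriv f (r ^ 2 + g r ^ 2) / 2 * g r with hE
  set φ : ℝ → ℝ := fun r => Real.arctan (deriv g r) with hφdef
  -- φ has derivative E on (0, a)
  have hφ : ∀ r ∈ Set.Ioo (0:ℝ) a, HasDerivAt φ (E r) r := by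
    intro r hr
    obtain ⟨-, h2⟩ := hsol r hr
    have h3 := h2.arctan
    have hpos : (0:ℝ) < 1 + deriv g r ^ 2 := by positivity
    convert h3 using 1
    simp only [hE]
    field_simp
  -- choose r1 small
  set r1 : ℝ := min (a/2) (Real.sqrt (1/M)) with hr1def
  have hr1pos : 0 < r1 := lt_min (by linarith) (Real.sqrt_pos.mpr (by positivity))
  have hr1a : r1 < a := lt_of_le_of_lt (min_le_left _ _) (by linarith)
  have hr1sq : r1 ^ 2 * M ≤ 1 := by
    have h1 : r1 ≤ Real.sqrt (1/M) := min_le_right _ _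
    have h2 : r1 ^ 2 ≤ 1/M := by
      have h3 := Real.sq_sqrt (le_of_lt (show (0:ℝ) < 1/M by positivity))
      nlinarith [hr1pos]
    calc r1 ^ 2 * M ≤ (1/M) * M := by nlinarith
      _ = 1 := by field_simp
  -- key bound: E r ≤ - g'(r) / (2r) on (0, r1]
  have hEbound : ∀ r ∈ Set.Ioc (0:ℝ) r1, E r ≤ -(deriv g r / (2 * r)) := by
    intro r hr
    have hrpos : 0 < r := hr.1
    have hra : r ∈ Set.Ioo (0:ℝ) a := ⟨hrpos, lt_of_le_of_lt hr.2 hr1a⟩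
    have hg' := hg'pos r hra
    have hg := hgpos r hra
    have hfl := hlow (r ^ 2 + g r ^ 2)
    have hfu := hup (r ^ 2 + g r ^ 2)
    have hrsq : r ^ 2 * M ≤ 1 := by
      nlinarith [mul_le_mul hr.2 hr.2 hrpos.le hr1pos.le, hr1sq, hM.le]
    have hnum : r ^ 2 * deriv f (r ^ 2 + g r ^ 2) + 1 - 2 * ((n:ℝ) - 1) ≤ 0 := by
      have := mul_le_mul_of_nonneg_left hfu (sq_nonneg r)
      nlinarith
    have hcoef : r / 2 * deriv f (r ^ 2 + g r ^ 2) - ((n:ℝ) - 1) / r ≤ -(1 / (2 * r)) := by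
      have heq : r / 2 * deriv f (r ^ 2 + g r ^ 2) - ((n:ℝ) - 1) / r + 1 / (2 * r)
          = (r ^ 2 * deriv f (r ^ 2 + g r ^ 2) + 1 - 2 * ((n:ℝ) - 1)) / (2 * r) := by
        field_simp
        ring
      have hdiv : (r ^ 2 * deriv f (r ^ 2 + g r ^ 2) + 1 - 2 * ((n:ℝ) - 1)) / (2 * r) ≤ 0 :=
        div_nonpos_of_nonpos_of_nonneg hnum (by linarith)
      linarith [heq ▸ hdiv]
    have hterm2 : 0 ≤ deriv f (r ^ 2 + g r ^ 2) / 2 * g r :=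
      mul_nonneg (by linarith) hg.le
    have h1 := mul_le_mul_of_nonneg_right hcoef hg'.le
    have h2 : -(1 / (2 * r)) * deriv g r = -(deriv g r / (2 * r)) := by ring
    simp only [hE]
    linarith [h1, hterm2]
  -- φ is antitone on (0, r1]
  have hconv1 : Convex ℝ (Set.Ioc (0:ℝ) r1) := convex_Ioc 0 r1
  have hsub : Set.Ioc (0:ℝ) r1 ⊆ Set.Ioo (0:ℝ) a := fun x hx =>
    ⟨hx.1, lt_of_le_of_lt hx.2 hr1a⟩
  have hint : interior (Set.Ioc (0:ℝ) r1) = Set.Ioo (0:ℝ) r1 := interior_Ioc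
  have hφcont : ContinuousOn φ (Set.Ioc (0:ℝ) r1) := fun x hx =>
    (hφ x (hsub hx)).continuousAt.continuousWithinAt
  have hφanti : AntitoneOn φ (Set.Ioc (0:ℝ) r1) := by
    apply antitoneOn_of_deriv_nonpos hconv1 hφcont
    · intro x hx
      rw [hint] at hx
      exact ((hφ x (hsub (Set.Ioo_subset_Ioc_self hx))).differentiableAt).differentiableWithinAt
    · intro x hx
      rw [hint] at hx
      have hx' : x ∈ Set.Ioc (0:ℝ) r1 := Set.Ioo_subset_Ioc_self hx
      rw [(hφ x (hsub hx')).deriv]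
      have hgx := hg'pos x (hsub hx')
      exact le_trans (hEbound x hx')
        (neg_nonpos.mpr (le_of_lt (div_pos hgx (by linarith [hx.1]))))
  -- δ is a lower bound for g' on (0, r1]
  set δ : ℝ := deriv g r1 with hδdef
  have hδpos : 0 < δ := hg'pos r1 ⟨hr1pos, hr1a⟩
  have hglb : ∀ r ∈ Set.Ioc (0:ℝ) r1, δ ≤ deriv g r := by
    intro r hr
    have h1 : φ r1 ≤ φ r := hφanti hr (Set.right_mem_Ioc.mpr hr1pos) hr.2
    by_contra hlt
    push_neg at hlt
    have := Real.arctan_strictMono hlt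
    simp only [hφdef] at h1
    exact absurd h1 (not_le.mpr this)
  -- the comparison function ψ = φ + (δ/2) log
  set ψ : ℝ → ℝ := fun r => φ r + δ / 2 * Real.log r with hψdef
  have hψ : ∀ r ∈ Set.Ioc (0:ℝ) r1, HasDerivAt ψ (E r + δ / 2 * r⁻¹) r := by
    intro r hr
    exact (hφ r (hsub hr)).add ((Real.hasDerivAt_log (ne_of_gt hr.1)).const_mul (δ / 2))
  have hψanti : AntitoneOn ψ (Set.Ioc (0:ℝ) r1) := by
    apply antitoneOn_of_deriv_nonpos hconv1
    · exact fun x hx => (hψ x hx).continuousAt.continuousWithinAt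
    · intro x hx
      rw [hint] at hx
      exact ((hψ x (Set.Ioo_subset_Ioc_self hx)).differentiableAt).differentiableWithinAt
    · intro x hx
      rw [hint] at hx
      have hx' : x ∈ Set.Ioc (0:ℝ) r1 := Set.Ioo_subset_Ioc_self hx
      rw [(hψ x hx').deriv]
      have hb := hEbound x hx'
      have hδx := hglb x hx'
      have hxpos : 0 < x := hx.1
      have h1 : δ / 2 * x⁻¹ ≤ deriv g x / (2 * x) := by
        have e : δ / 2 * x⁻¹ = δ / (2 * x) := by
          field_simp
        rw [e]
        gcongr
      calc E x + δ / 2 * x⁻¹ ≤ -(deriv g x / (2 * x)) + deriv g x / (2 * x) :=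
            add_le_add hb h1
        _ = 0 := by ring
  -- choose s very small and derive a contradiction
  set X : ℝ := Real.log r1 - 2 / δ * (Real.pi / 2 - φ r1 + 1) with hX
  set s : ℝ := min (r1 / 2) (Real.exp X) with hs
  have hspos : 0 < s := lt_min (by linarith) (Real.exp_pos X)
  have hsr1 : s ≤ r1 := le_trans (min_le_left _ _) (by linarith)
  have hsmem : s ∈ Set.Ioc (0:ℝ) r1 := ⟨hspos, hsr1⟩
  have hψs : ψ r1 ≤ ψ s := hψanti hsmem (Set.right_mem_Ioc.mpr hr1pos) hsr1
  have hlogs : Real.log s ≤ X := by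
    calc Real.log s ≤ Real.log (Real.exp X) :=
          Real.log_le_log hspos (min_le_right _ _)
      _ = X := Real.log_exp X
  have hδne : δ ≠ 0 := ne_of_gt hδpos
  have hbound : Real.pi / 2 - φ r1 + 1 ≤ δ / 2 * (Real.log r1 - Real.log s) := by
    have h1 : 2 / δ * (Real.pi / 2 - φ r1 + 1) ≤ Real.log r1 - Real.log s := by
      simp only [hX] at hlogs; linarith
    have h2 := mul_le_mul_of_nonneg_left h1 (le_of_lt (show (0:ℝ) < δ / 2 by positivity))
    have h3 : δ / 2 * (2 / δ * (Real.pi / 2 - φ r1 + 1)) = Real.pi / 2 - φ r1 + 1 := by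
      field_simp
    linarith
  have hφs : Real.pi / 2 + 1 ≤ φ s := by
    simp only [hψdef] at hψs
    have hdist : δ / 2 * (Real.log r1 - Real.log s)
        = δ / 2 * Real.log r1 - δ / 2 * Real.log s := by ring
    linarith
  have : φ s < Real.pi / 2 := Real.arctan_lt_pi_div_two (deriv g s)
  linarith
end

section
/- Set b = √(2(n−1)/m). There exist a constant C > 0 and R₀ > 1 such that for every R ≥ R₀, writing R₁ = R − 1/R, and for every r ∈ [b, R₁], one has ∫_r^{R₁} (R₁/s)^{n−1} · e^{(m/4)(s² − R₁²)} ds ≤ C/R. -/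
/-- With `b = √(2(n−1)/m)` and `R₁ = R − 1/R`, for all large `R` and all
`r ∈ [b, R₁]`, `∫_r^{R₁} (R₁/s)^{n−1} e^{(m/4)(s² − R₁²)} ds ≤ C/R`. -/
theorem integral_tail_estimate
    (n : ℕ) (hn : 2 ≤ n) (m : ℝ) (hm : 0 < m) :
    ∃ C R₀ : ℝ, 0 < C ∧ 1 < R₀ ∧
      ∀ R : ℝ, R₀ ≤ R →
        ∀ r ∈ Set.Icc (Real.sqrt (2 * ((n : ℝ) - 1) / m)) (R - 1 / R),
          (∫ s in r..(R - 1 / R),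
              ((R - 1 / R) / s) ^ (n - 1) *
                Real.exp (m / 4 * (s ^ 2 - (R - 1 / R) ^ 2)))
            ≤ C / R := by
  have hn1 : (0:ℝ) < (n:ℝ) - 1 := by
    have h2 : (2:ℝ) ≤ (n:ℝ) := by exact_mod_cast hn
    linarith
  set b := Real.sqrt (2 * ((n : ℝ) - 1) / m) with hbdef
  have hb : 0 < b := Real.sqrt_pos.mpr (by positivity)
  clear_value b
  refine ⟨16 / m, max 2 (8 * ((n:ℝ)-1) / (m * b) + 2), by positivity,
    lt_of_lt_of_le one_lt_two (le_max_left _ _), ?_⟩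
  intro R hR r hr
  set R₁ := R - 1 / R with hR1def
  have hR2 : (2:ℝ) ≤ R := le_trans (le_max_left _ _) hR
  have hRpos : 0 < R := by linarith
  have hR1ge : R - 1 ≤ R₁ := by
    have h1 : 1 / R ≤ 1 := by rw [div_le_one hRpos]; linarith
    rw [hR1def]; linarith
  have hR1half : R / 2 ≤ R₁ := by
    have h1 : 1 / R ≤ R / 2 := by
      rw [div_le_div_iff₀ hRpos two_pos]; nlinarith
    rw [hR1def]; linarith
  clear_value R₁
  have hR1big : 8 * ((n:ℝ)-1) / (m * b) ≤ R₁ := by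
    have := le_trans (le_max_right _ _) hR
    linarith
  have hR1pos : 0 < R₁ := by linarith
  obtain ⟨hrb, hrR₁⟩ := hr
  have hrpos : 0 < r := lt_of_lt_of_le hb hrb
  set a := m / 8 * R₁ with hadef
  have ha : 0 < a := by rw [hadef]; positivity
  clear_value a
  have hkey : ((n:ℝ)-1) / b ≤ a := by
    rw [div_le_iff₀ hb]
    have hmb : 0 < m * b := by positivity
    rw [div_le_iff₀ hmb] at hR1big
    nlinarith
  -- pointwise bound on [r, R₁]
  have hpt : ∀ s ∈ Set.Icc r R₁,
      (R₁ / s) ^ (n - 1) * Real.exp (m / 4 * (s ^ 2 - R₁ ^ 2))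
        ≤ Real.exp (a * (s - R₁)) := by
    intro s hs
    have hs0 : 0 < s := lt_of_lt_of_le hrpos hs.1
    have hsR : s ≤ R₁ := hs.2
    have hbs : b ≤ s := le_trans hrb hs.1
    have hu : 0 ≤ R₁ - s := by linarith
    have hq : 0 < R₁ / s := by positivity
    have h1n : 1 ≤ n := le_trans one_le_two hn
    have hcast : ((n - 1 : ℕ) : ℝ) = (n:ℝ) - 1 := by
      push_cast [Nat.cast_sub h1n]; ring
    have hpow : (R₁ / s) ^ (n - 1)
        = Real.exp (((n:ℝ) - 1) * Real.log (R₁ / s)) := by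
      rw [← hcast, ← Real.log_pow, Real.exp_log (pow_pos hq _)]
    rw [hpow, ← Real.exp_add, Real.exp_le_exp]
    have hlog : Real.log (R₁ / s) ≤ (R₁ - s) / s := by
      have h1 := Real.log_le_sub_one_of_pos hq
      have h2 : R₁ / s - 1 = (R₁ - s) / s := by field_simp
      linarith [h2 ▸ h1]
    have h3 : (R₁ - s) / s ≤ (R₁ - s) / b := by gcongr
    have hA : ((n:ℝ) - 1) * Real.log (R₁ / s) ≤ a * (R₁ - s) := by
      calc ((n:ℝ) - 1) * Real.log (R₁ / s)
          ≤ ((n:ℝ) - 1) * ((R₁ - s) / b) := by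
            apply mul_le_mul_of_nonneg_left _ hn1.le
            linarith
        _ = (((n:ℝ) - 1) / b) * (R₁ - s) := by ring
        _ ≤ a * (R₁ - s) := mul_le_mul_of_nonneg_right hkey hu
    have hB : m / 4 * (s ^ 2 - R₁ ^ 2) ≤ -(m / 4 * R₁) * (R₁ - s) := by
      nlinarith [mul_nonneg (mul_nonneg hm.le hu) hs0.le]
    have hC : a * (R₁ - s) + -(m / 4 * R₁) * (R₁ - s) ≤ a * (s - R₁) := by
      have h4 : m / 4 * R₁ - a = a := by rw [hadef]; ring
      nlinarith
    linarith
  -- integrability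
  have hce : Continuous (fun s : ℝ => Real.exp (m / 4 * (s ^ 2 - R₁ ^ 2))) :=
    Real.continuous_exp.comp
      (continuous_const.mul ((continuous_pow 2).sub continuous_const))
  have hcf : ContinuousOn
      (fun s : ℝ => (R₁ / s) ^ (n - 1) * Real.exp (m / 4 * (s ^ 2 - R₁ ^ 2)))
      (Set.Icc r R₁) := by
    apply ContinuousOn.mul
    · exact (continuousOn_const.div continuousOn_id
        (fun x hx => ne_of_gt (lt_of_lt_of_le hrpos hx.1))).pow _
    · exact hce.continuousOn
  have hif : IntervalIntegrable
      (fun s : ℝ => (R₁ / s) ^ (n - 1) * Real.exp (m / 4 * (s ^ 2 - R₁ ^ 2)))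
      MeasureTheory.volume r R₁ := hcf.intervalIntegrable_of_Icc hrR₁
  have hcg : Continuous (fun s : ℝ => Real.exp (a * (s - R₁))) :=
    Real.continuous_exp.comp
      (continuous_const.mul (continuous_id.sub continuous_const))
  have hig : IntervalIntegrable (fun s : ℝ => Real.exp (a * (s - R₁)))
      MeasureTheory.volume r R₁ := hcg.intervalIntegrable r R₁
  have hmono := intervalIntegral.integral_mono_on hrR₁ hif hig hpt
  -- compute ∫ exp (a*(s - R₁))
  have hderiv : ∀ x ∈ Set.uIcc r R₁,
      HasDerivAt (fun s : ℝ => Real.exp (a * (s - R₁)) / a)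
        (Real.exp (a * (x - R₁))) x := by
    intro x _
    have h1 : HasDerivAt (fun s : ℝ => a * (s - R₁)) a x := by
      simpa using ((hasDerivAt_id x).sub_const R₁).const_mul a
    have h2 := (Real.hasDerivAt_exp (a * (x - R₁))).comp x h1
    have h3 := h2.div_const a
    rw [mul_div_cancel_right₀ _ (ne_of_gt ha)] at h3
    exact h3
  have hint : (∫ s in r..R₁, Real.exp (a * (s - R₁)))
      = Real.exp (a * (R₁ - R₁)) / a - Real.exp (a * (r - R₁)) / a :=
    intervalIntegral.integral_eq_sub_of_hasDerivAt hderiv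
      (hcg.intervalIntegrable r R₁)
  have hle1 : (∫ s in r..R₁, Real.exp (a * (s - R₁))) ≤ 1 / a := by
    rw [hint]
    have h0 : Real.exp (a * (R₁ - R₁)) = 1 := by simp
    rw [h0]
    have h5 : 0 < Real.exp (a * (r - R₁)) / a := by positivity
    linarith
  have hfin : 1 / a ≤ 16 / m / R := by
    rw [div_div, div_le_div_iff₀ ha (by positivity : (0:ℝ) < m * R)]
    rw [hadef]
    linarith [mul_le_mul_of_nonneg_left hR1half hm.le]
  calc (∫ s in r..R₁,
          (R₁ / s) ^ (n - 1) * Real.exp (m / 4 * (s ^ 2 - R₁ ^ 2)))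
      ≤ ∫ s in r..R₁, Real.exp (a * (s - R₁)) := hmono
    _ ≤ 1 / a := hle1
    _ ≤ 16 / m / R := hfin
end

section
/- For each x ∈ ℝ there exists a unique positive number l(x) satisfying l(x)²·f'(x² + l(x)²) = 2(n−1); moreover √(2(n−1)/M) ≤ l(x) ≤ √(2(n−1)/m). -/
/-!
Put `φ = f'` and `G(l) = l² φ(x² + l²)`. Since `φ` is monotone (`f'' ≥ 0`) and positive, `G` is
strictly increasing on `[0, ∞)`, which gives uniqueness; `G(0) = 0` and `G(√(c/m)) ≥ c` give a
root of `G(l) = c` by the intermediate value theorem. The bounds on `l` then come straight from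
`m ≤ φ ≤ M` in the equation `l² φ(x² + l²) = c`.
-/

open Set

section SqMulComp

variable (g : ℝ → ℝ) (x : ℝ)

theorem strictMonoOn_sq_mul_comp_sq_add_sq (hg : Monotone g) (hpos : ∀ s, 0 < g s) :
    StrictMonoOn (fun l => l ^ 2 * g (x ^ 2 + l ^ 2)) (Ici 0) := by
  intro a ha b hb hab
  have hsq : a ^ 2 < b ^ 2 := pow_lt_pow_left₀ hab ha two_ne_zero
  exact mul_lt_mul hsq (hg (by linarith)) (hpos _) (by positivity)

theorem exists_pos_sq_mul_comp_sq_add_sq_eq (hg : Continuous g) {m c : ℝ} (hm : 0 < m)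
    (hlow : ∀ s, m ≤ g s) (hc : 0 < c) : ∃ l, 0 < l ∧ l ^ 2 * g (x ^ 2 + l ^ 2) = c := by
  set b := √(c / m)
  have hb : c ≤ b ^ 2 * g (x ^ 2 + b ^ 2) :=
    calc c = b ^ 2 * m := by rw [Real.sq_sqrt (div_pos hc hm).le, div_mul_cancel₀ c hm.ne']
      _ ≤ b ^ 2 * g (x ^ 2 + b ^ 2) := mul_le_mul_of_nonneg_left (hlow _) (sq_nonneg b)
  have hG : Continuous fun l => l ^ 2 * g (x ^ 2 + l ^ 2) := by fun_prop
  obtain ⟨l, hlb, hlc⟩ := intermediate_value_Icc (Real.sqrt_nonneg _) hG.continuousOn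
    ⟨by simpa using hc.le, hb⟩
  refine ⟨l, hlb.1.lt_of_ne ?_, hlc⟩
  rintro rfl
  simp [hc.ne] at hlc

end SqMulComp

theorem sqrt_div_le_of_sq_mul_eq {l y c M : ℝ} (hy : 0 < y) (hyM : y ≤ M) (h : l ^ 2 * y = c)
    (hl : 0 ≤ l) : √(c / M) ≤ l := by
  have hM : 0 < M := hy.trans_le hyM
  have hle : c / M ≤ l ^ 2 := by
    rw [div_le_iff₀ hM, ← h]
    exact mul_le_mul_of_nonneg_left hyM (sq_nonneg l)
  exact (Real.sqrt_le_sqrt hle).trans_eq (Real.sqrt_sq hl)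

theorem le_sqrt_div_of_sq_mul_eq {l y c m : ℝ} (hm : 0 < m) (hmy : m ≤ y) (h : l ^ 2 * y = c) :
    l ≤ √(c / m) := by
  refine Real.le_sqrt_of_sq_le ?_
  rw [le_div_iff₀ hm, ← h]
  exact mul_le_mul_of_nonneg_left hmy (sq_nonneg l)

theorem exists_unique_l_general
    (n : ℕ) (hn : 2 ≤ n) (m M : ℝ) (hm : 0 < m)
    (f : ℝ → ℝ) (hf : ContDiff ℝ 2 f)
    (hconv : ∀ s : ℝ, 0 ≤ deriv (deriv f) s)
    (hlow : ∀ s : ℝ, m ≤ deriv f s) (hup : ∀ s : ℝ, deriv f s ≤ M) :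
    ∀ x : ℝ, ∃ l : ℝ,
      (0 < l ∧ l ^ 2 * deriv f (x ^ 2 + l ^ 2) = 2 * ((n : ℝ) - 1)) ∧
      Real.sqrt (2 * ((n : ℝ) - 1) / M) ≤ l ∧
      l ≤ Real.sqrt (2 * ((n : ℝ) - 1) / m) ∧
      ∀ l' : ℝ, 0 < l' → l' ^ 2 * deriv f (x ^ 2 + l' ^ 2) = 2 * ((n : ℝ) - 1) →
        l' = l := by
  intro x
  have hc : 0 < 2 * ((n : ℝ) - 1) := by
    have : (2 : ℝ) ≤ n := by exact_mod_cast hn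
    linarith
  have hdf : Differentiable ℝ (deriv f) :=
    (hf.iterate_deriv' 1 1).differentiable one_ne_zero
  have hpos : ∀ s, 0 < deriv f s := fun s => hm.trans_le (hlow s)
  obtain ⟨l, hl, hlc⟩ := exists_pos_sq_mul_comp_sq_add_sq_eq _ x hdf.continuous hm hlow hc
  refine ⟨l, ⟨hl, hlc⟩, sqrt_div_le_of_sq_mul_eq (hpos _) (hup _) hlc hl.le,
    le_sqrt_div_of_sq_mul_eq hm (hlow _) hlc, fun l' hl' hl'c => ?_⟩
  exact (strictMonoOn_sq_mul_comp_sq_add_sq _ x (monotone_of_deriv_nonneg hdf hconv) hpos).injOn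
    hl'.le hl.le (hl'c.trans hlc.symm)

/-- For each `x` there is a unique `l > 0` with `l² f'(x² + l²) = 2(n−1)`, and
`√(2(n−1)/M) ≤ l ≤ √(2(n−1)/m)`. -/
theorem exists_unique_l
    (n : ℕ) (hn : 2 ≤ n) (m M : ℝ) (hm : 0 < m) (hmM : m ≤ M)
    (f : ℝ → ℝ) (hf : ContDiff ℝ 2 f)
    (hconv : ∀ s : ℝ, 0 ≤ deriv (deriv f) s)
    (hlow : ∀ s : ℝ, m ≤ deriv f s) (hup : ∀ s : ℝ, deriv f s ≤ M) :
    ∀ x : ℝ, ∃ l : ℝ,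
      (0 < l ∧ l ^ 2 * deriv f (x ^ 2 + l ^ 2) = 2 * ((n : ℝ) - 1)) ∧
      Real.sqrt (2 * ((n : ℝ) - 1) / M) ≤ l ∧
      l ≤ Real.sqrt (2 * ((n : ℝ) - 1) / m) ∧
      ∀ l' : ℝ, 0 < l' → l' ^ 2 * deriv f (x ^ 2 + l' ^ 2) = 2 * ((n : ℝ) - 1) →
        l' = l :=
  exists_unique_l_general n hn m M hm f hf hconv hlow hup
end

section
/- Let l(x) denote the unique positive number satisfying l(x)²·f'(x² + l(x)²) = 2(n−1). Then x ↦ l(x) is differentiable on ℝ with l'(x) = − 4(n−1)·x·f''(x² + l(x)²) / ( 2·l(x)·f'(x² + l(x)²)² + 4(n−1)·l(x)·f''(x² + l(x)²) ); in particular l'(x) ≤ 0 for all x ≥ 0, so l is nonincreasing on [0, +∞). -/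
/-!
Put `c = 2(n - 1)` and `Φ(w) = w - c / f'(w)`. The equation defining `l` says exactly that
`Φ(x² + l(x)²) = x²`. As `f'' ≥ 0` and `f' ≥ m > 0`, `Φ` has derivative `1 + c f'' / f'² > 0` and
maps ℝ onto ℝ (`w - c/m ≤ Φ(w) ≤ w`), so it has a differentiable inverse. Hence
`x² + l(x)² = Φ⁻¹(x²)` is differentiable, and so is `l`, the positive square root of
`Φ⁻¹(x²) - x²`; the chain rule gives the formula, whose sign for `x ≥ 0` is that of `-x f''`.
-/

open Filter Topology

theorem HasDerivAt.of_comp_eq_of_surjective {Φ Φ' g h : ℝ → ℝ} {h' x : ℝ}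
    (hΦ : ∀ w, HasDerivAt Φ (Φ' w) w) (hΦ' : ∀ w, 0 < Φ' w) (hsurj : Function.Surjective Φ)
    (hg : ∀ y, Φ (g y) = h y) (hh : HasDerivAt h h' x) :
    HasDerivAt g (h' / Φ' (g x)) x := by
  let e : ℝ ≃o ℝ := (strictMono_of_hasDerivAt_pos hΦ hΦ').orderIsoOfSurjective Φ hsurj
  have hge : g = e.symm ∘ h := funext fun y => e.injective (by simpa [e] using hg y)
  have he : HasDerivAt e.symm (Φ' (e.symm (h x)))⁻¹ (h x) :=
    .of_local_left_inverse e.symm.continuous.continuousAt (hΦ _) (hΦ' _).ne'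
      (Eventually.of_forall e.apply_symm_apply)
  rw [hge, div_eq_inv_mul]
  exact he.comp x hh

theorem hasDerivAt_sub_const_div {φ : ℝ → ℝ} {φ' c w : ℝ} (hφ : HasDerivAt φ φ' w)
    (hw : φ w ≠ 0) : HasDerivAt (fun v => v - c / φ v) (1 + c * φ' / φ w ^ 2) w :=
  ((hasDerivAt_id' w).sub ((hasDerivAt_const w c).div hφ hw)).congr_deriv (by ring)

theorem surjective_sub_const_div {φ : ℝ → ℝ} {m c : ℝ} (hφ : Continuous φ) (hm : 0 < m)
    (hφm : ∀ w, m ≤ φ w) (hc : 0 ≤ c) : Function.Surjective fun w => w - c / φ w := by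
  have hpos : ∀ w, 0 < φ w := fun w => hm.trans_le (hφm w)
  refine Continuous.surjective (continuous_id.sub (continuous_const.div hφ fun w => (hpos w).ne'))
    ?_ ?_
  · refine tendsto_atTop_mono (fun w => ?_) (tendsto_atTop_add_const_right _ (-(c / m)) tendsto_id)
    have : c / φ w ≤ c / m := div_le_div_of_nonneg_left hc hm (hφm w)
    simp only [id_eq]
    linarith
  · refine tendsto_atBot_mono (fun w => ?_) tendsto_id
    have : 0 ≤ c / φ w := div_nonneg hc (hpos w).le
    simp only [id_eq]
    linarith

theorem HasDerivAt.of_sq {l : ℝ → ℝ} {d x : ℝ} (hl : ∀ᶠ y in 𝓝 x, 0 ≤ l y) (hx : l x ≠ 0)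
    (h : HasDerivAt (fun y => l y ^ 2) d x) : HasDerivAt l (d / (2 * l x)) x := by
  have hsqrt := h.sqrt (pow_ne_zero 2 hx)
  rw [Real.sqrt_sq hl.self_of_nhds] at hsqrt
  exact hsqrt.congr_of_eventuallyEq (hl.mono fun y hy => (Real.sqrt_sq hy).symm)

theorem hasDerivAt_of_sq_mul_comp_sq_add_sq_eq {φ l : ℝ → ℝ} {m c : ℝ} (hc : 0 ≤ c) (hm : 0 < m)
    (hφ : Differentiable ℝ φ) (hφm : ∀ s, m ≤ φ s) (hφ' : ∀ s, 0 ≤ deriv φ s)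
    (hl : ∀ x, 0 < l x) (hroot : ∀ x, l x ^ 2 * φ (x ^ 2 + l x ^ 2) = c) (x : ℝ) :
    HasDerivAt l
      (-(2 * c * x * deriv φ (x ^ 2 + l x ^ 2)) /
        (2 * l x * φ (x ^ 2 + l x ^ 2) ^ 2 + 2 * c * l x * deriv φ (x ^ 2 + l x ^ 2))) x := by
  have hpos : ∀ s, 0 < φ s := fun s => hm.trans_le (hφm s)
  have hΦ : ∀ w, HasDerivAt (fun v => v - c / φ v) (1 + c * deriv φ w / φ w ^ 2) w :=
    fun w => hasDerivAt_sub_const_div (hφ w).hasDerivAt (hpos w).ne'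
  have hΦ' : ∀ w, 0 < 1 + c * deriv φ w / φ w ^ 2 :=
    fun w => add_pos_of_pos_of_nonneg one_pos (div_nonneg (mul_nonneg hc (hφ' w)) (sq_nonneg _))
  have hkey : ∀ y, (y ^ 2 + l y ^ 2) - c / φ (y ^ 2 + l y ^ 2) = y ^ 2 := fun y => by
    rw [← hroot y, mul_div_assoc, div_self (hpos _).ne', mul_one, add_sub_cancel_right]
  have hsq : HasDerivAt (fun y : ℝ => y ^ 2) (2 * x) x := by simpa using hasDerivAt_pow 2 x
  have hsum := HasDerivAt.of_comp_eq_of_surjective hΦ hΦ'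
    (surjective_sub_const_div hφ.continuous hm hφm hc) hkey hsq
  have hl2 : HasDerivAt (fun y => l y ^ 2) _ x :=
    (hsum.sub hsq).congr_of_eventuallyEq (Eventually.of_forall fun y => by simp)
  convert hl2.of_sq (Eventually.of_forall fun y => (hl y).le) (hl x).ne' using 1
  set A := φ (x ^ 2 + l x ^ 2)
  set B := deriv φ (x ^ 2 + l x ^ 2)
  have hA : A ≠ 0 := (hpos _).ne'
  have hD : c * B + A ^ 2 ≠ 0 :=
    (add_pos_of_nonneg_of_pos (mul_nonneg hc (hφ' _)) (by positivity)).ne'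
  have hΦ'_eq : 1 + c * B / A ^ 2 = (c * B + A ^ 2) / A ^ 2 := by field_simp; ring
  have hden : 2 * l x * A ^ 2 + 2 * c * l x * B = 2 * l x * (c * B + A ^ 2) := by ring
  have hL : l x ≠ 0 := (hl x).ne'
  rw [hΦ'_eq, hden]
  field_simp
  ring

theorem derivative_of_l_general
    (n : ℕ) (hn : 2 ≤ n) (m : ℝ) (hm : 0 < m)
    (f : ℝ → ℝ) (hf : ContDiff ℝ 2 f)
    (hconv : ∀ s : ℝ, 0 ≤ deriv (deriv f) s)
    (hlow : ∀ s : ℝ, m ≤ deriv f s)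
    (l : ℝ → ℝ) (hl : ∀ x : ℝ, 0 < l x)
    (hroot : ∀ x : ℝ, (l x) ^ 2 * deriv f (x ^ 2 + (l x) ^ 2) = 2 * ((n : ℝ) - 1)) :
    (∀ x : ℝ, HasDerivAt l
      (-(4 * ((n : ℝ) - 1) * x * deriv (deriv f) (x ^ 2 + (l x) ^ 2)) /
        (2 * l x * (deriv f (x ^ 2 + (l x) ^ 2)) ^ 2
          + 4 * ((n : ℝ) - 1) * l x * deriv (deriv f) (x ^ 2 + (l x) ^ 2))) x) ∧
    (∀ x : ℝ, 0 ≤ x → deriv l x ≤ 0) ∧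
    AntitoneOn l (Set.Ici 0) := by
  have hc : (0 : ℝ) ≤ 4 * ((n : ℝ) - 1) := by
    have : (2 : ℝ) ≤ n := by exact_mod_cast hn
    linarith
  have hf' : Differentiable ℝ (deriv f) :=
    ((contDiff_succ_iff_deriv (n := 1)).1 hf).2.2.differentiable one_ne_zero
  have hderiv := hasDerivAt_of_sq_mul_comp_sq_add_sq_eq (by linarith) hm hf' hlow hconv hl hroot
  rw [show (2 : ℝ) * (2 * ((n : ℝ) - 1)) = 4 * ((n : ℝ) - 1) by ring] at hderiv
  have hnonpos : ∀ x, 0 ≤ x → deriv l x ≤ 0 := fun x hx => by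
    rw [(hderiv x).deriv]
    exact div_nonpos_of_nonpos_of_nonneg
      (neg_nonpos.2 (mul_nonneg (mul_nonneg hc hx) (hconv _)))
      (add_nonneg (mul_nonneg (mul_nonneg zero_le_two (hl x).le) (sq_nonneg _))
        (mul_nonneg (mul_nonneg hc (hl x).le) (hconv _)))
  have hl_diff : Differentiable ℝ l := fun x => (hderiv x).differentiableAt
  exact ⟨hderiv, hnonpos, antitoneOn_of_deriv_nonpos (convex_Ici 0) hl_diff.continuous.continuousOn
    hl_diff.differentiableOn fun x hx => hnonpos x (interior_subset hx)⟩

/-- The curve `l(x)` defined by `l(x)² f'(x² + l(x)²) = 2(n−1)` is differentiable with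
`l'(x) = −4(n−1) x f'' / (2 l (f')² + 4(n−1) l f'')`; in particular `l' ≤ 0` on
`[0, +∞)`, so `l` is nonincreasing there. -/
theorem derivative_of_l
    (n : ℕ) (hn : 2 ≤ n) (m M : ℝ) (hm : 0 < m) (hmM : m ≤ M)
    (f : ℝ → ℝ) (hf : ContDiff ℝ 2 f)
    (hconv : ∀ s : ℝ, 0 ≤ deriv (deriv f) s)
    (hlow : ∀ s : ℝ, m ≤ deriv f s) (hup : ∀ s : ℝ, deriv f s ≤ M)
    (l : ℝ → ℝ) (hl : ∀ x : ℝ, 0 < l x)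
    (hroot : ∀ x : ℝ, (l x) ^ 2 * deriv f (x ^ 2 + (l x) ^ 2) = 2 * ((n : ℝ) - 1)) :
    (∀ x : ℝ, HasDerivAt l
      (-(4 * ((n : ℝ) - 1) * x * deriv (deriv f) (x ^ 2 + (l x) ^ 2)) /
        (2 * l x * (deriv f (x ^ 2 + (l x) ^ 2)) ^ 2
          + 4 * ((n : ℝ) - 1) * l x * deriv (deriv f) (x ^ 2 + (l x) ^ 2))) x) ∧
    (∀ x : ℝ, 0 ≤ x → deriv l x ≤ 0) ∧
    AntitoneOn l (Set.Ici 0) :=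
  derivative_of_l_general n hn m hm f hf hconv hlow l hl hroot
end
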